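/- arXiv:2107.08888 — 3 statements merged into one kernel-verified Lean document; each statement's English description precedes it below -/
import Mathlib

section
/- Let S be a nonempty finite set with cardinality |S|, let P be a probability mass function on S, and let X_1,...,X_T (T ≥ 1) be i.i.d. S-valued random variables with law P. For every δ ∈ (0, e^{-1}], with probability at least 1 − δ the empirical distribution satisfies ‖P̂ − P‖₁ ≤ (1 + √2) · √( |S| · log(1/δ) / T ). -/
/-!
Since `P̂ - P` sums to zero, `‖P̂ - P‖₁ = 2 (P̂(A) - P(A))` for `A = {s | P(s) ≤ P̂(s)}`, so a
deviation `ε` in `L1` forces `P̂(A) - P(A) ≥ ε / 2` for one of the `2 ^ |S|` subsets `A`.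
For fixed `A`, `T · P̂(A)` is a sum of `T` independent Bernoulli(`P(A)`) variables, and
Hoeffding's inequality bounds that event by `exp (-T ε² / 2)`. With
`ε = (1 + √2) √(|S| log(1/δ) / T)` the union bound `2 ^ |S| exp (-T ε² / 2)` is at most `δ`.
-/

open MeasureTheory ProbabilityTheory Finset Real

theorem Finset.sum_abs_eq_two_mul_sum_filter_nonneg {ι R : Type*} [Ring R] [LinearOrder R]
    [IsOrderedRing R] (s : Finset ι) (d : ι → R) (h : ∑ i ∈ s, d i = 0) :
    ∑ i ∈ s, |d i| = 2 * ∑ i ∈ s with 0 ≤ d i, d i := by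
  calc ∑ i ∈ s, |d i| = ∑ i ∈ s, (2 * (if 0 ≤ d i then d i else 0) - d i) := by
        refine sum_congr rfl fun i _ => ?_
        split_ifs with hi
        · rw [abs_of_nonneg hi]; noncomm_ring
        · rw [abs_of_neg (not_le.mp hi)]; noncomm_ring
    _ = 2 * ∑ i ∈ s with 0 ≤ d i, d i := by
        rw [sum_sub_distrib, h, sub_zero, ← mul_sum, sum_filter]

theorem exists_finset_mul_add_le_card_filter_mem {S : Type*} [Fintype S] [DecidableEq S]
    {n : ℕ} (hn : n ≠ 0) (x : Fin n → S) {P : S → ℝ} (hP : ∑ s, P s = 1) {r : ℝ}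
    (hr : r ≤ ∑ s, |(#{i | x i = s} : ℝ) / n - P s|) :
    ∃ A : Finset S, n * ∑ s ∈ A, P s + n * (r / 2) ≤ #{i | x i ∈ A} := by
  set d : S → ℝ := fun s => (#{i | x i = s} : ℝ) / n - P s
  have hfreq : ∀ A : Finset S, ∑ s ∈ A, d s = #{i | x i ∈ A} / n - ∑ s ∈ A, P s := fun A => by
    rw [sum_sub_distrib, ← sum_div, ← Nat.cast_sum, sum_card_fiberwise_eq_card_filter]
  have hd : ∑ s, d s = 0 := by
    simp [hfreq, hP, hn]
  refine ⟨({s | 0 ≤ d s} : Finset S), ?_⟩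
  have hr' := hr.trans_eq (sum_abs_eq_two_mul_sum_filter_nonneg univ d hd)
  rw [hfreq] at hr'
  field_simp at hr'
  linarith

theorem two_pow_mul_exp_le {K : ℕ} (hK : 1 ≤ K) {δ : ℝ} (hδ0 : 0 < δ) (hδ1 : δ ≤ exp (-1))
    {T : ℝ} (hT : 0 < T) :
    2 ^ K * exp (-2 * T * ((1 + √2) * √(K * log (1 / δ) / T) / 2) ^ 2) ≤ δ := by
  have hL : 1 ≤ log (1 / δ) := by
    rw [one_div, log_inv, le_neg, ← log_exp (-1)]
    exact log_le_log hδ0 hδ1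
  set L := log (1 / δ)
  have hK' : (1 : ℝ) ≤ K := Nat.one_le_cast.mpr hK
  have hexponent : K * log 2 + L ≤ (1 + √2) ^ 2 * (K * L) / 2 := by
    have hlog2 : log 2 < 1 := log_two_lt_d9.trans (by norm_num)
    have hsqrt2 : 1 ≤ √2 := one_le_sqrt.mpr one_le_two
    nlinarith [mul_le_mul_of_nonneg_left hlog2.le (by linarith : (0 : ℝ) ≤ K),
      mul_nonneg (sub_nonneg.mpr hK') (sub_nonneg.mpr hL),
      mul_nonneg (sub_nonneg.mpr hsqrt2) (by nlinarith : 0 ≤ K * L)]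
  have hexp : -2 * T * ((1 + √2) * √(K * L / T) / 2) ^ 2 = -((1 + √2) ^ 2 * (K * L) / 2) := by
    rw [div_pow, mul_pow, sq_sqrt (by positivity)]
    field_simp
  calc 2 ^ K * exp (-2 * T * ((1 + √2) * √(K * L / T) / 2) ^ 2)
      = exp (K * log 2 - (1 + √2) ^ 2 * (K * L) / 2) := by
        rw [hexp, sub_eq_add_neg, exp_add, ← rpow_natCast, rpow_def_of_pos two_pos,
          mul_comm (log 2)]
    _ ≤ exp (-L) := exp_le_exp.mpr (by linarith)
    _ = δ := by rw [exp_neg, exp_log (by positivity), one_div, inv_inv]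

section Probability

variable {Ω S : Type*} [MeasurableSpace Ω] {μ : Measure Ω} [MeasurableSpace S]
  [MeasurableSingletonClass S]

theorem measureReal_card_filter_mem_ge_le {ι : Type*} [Fintype ι] [DecidableEq S]
    [IsProbabilityMeasure μ] {X : ι → Ω → S} (hX : ∀ i, Measurable (X i))
    (hindep : iIndepFun X μ) (A : Finset S) {p : ℝ} (hp : ∀ i, μ.real (X i ⁻¹' A) = p)
    {ε : ℝ} (hε : 0 ≤ ε) :
    μ.real {ω | Fintype.card ι * p + Fintype.card ι * ε ≤ #{i | X i ω ∈ A}} ≤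
      exp (-2 * Fintype.card ι * ε ^ 2) := by
  set f : S → ℝ := (A : Set S).indicator 1
  have hf : Measurable f := measurable_const.indicator A.measurableSet
  have hmean : ∀ i, μ[fun ω => f (X i ω)] = p := fun i => by
    rw [← hp i, ← integral_indicator_one (hX i A.measurableSet)]
    rfl
  have hsubG : ∀ i ∈ (univ : Finset ι),
      HasSubgaussianMGF (fun ω => f (X i ω) - p) ((‖(1 : ℝ) - 0‖₊ / 2) ^ 2) μ := fun i _ => by
    have hrange : ∀ ω, f (X i ω) ∈ Set.Icc 0 1 := fun ω => by
      by_cases h : X i ω ∈ A <;> simp [f, h]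
    simpa only [hmean i] using hasSubgaussianMGF_of_mem_Icc (μ := μ) (X := fun ω => f (X i ω))
      (hf.comp (hX i)).aemeasurable (ae_of_all _ hrange)
  have hcount : ∀ ω, ∑ i, (f (X i ω) - p) = #{i | X i ω ∈ A} - Fintype.card ι * p := fun ω => by
    simp [f, Set.indicator_apply, Finset.sum_boole]
  have hsum := HasSubgaussianMGF.measure_sum_ge_le_of_iIndepFun (hindep.comp (fun _ x => f x - p)
    fun _ => hf.sub_const p) hsubG (mul_nonneg (Nat.cast_nonneg (Fintype.card ι)) hε)
  simp only [Function.comp_apply, hcount, sum_const, card_univ, nsmul_eq_mul] at hsum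
  have hexp : -((Fintype.card ι : ℝ) * ε) ^ 2 /
      (2 * ((Fintype.card ι * (‖(1 : ℝ) - 0‖₊ / 2) ^ 2 : NNReal) : ℝ)) =
      -2 * Fintype.card ι * ε ^ 2 := by
    rcases (Fintype.card ι).eq_zero_or_pos with h | h
    · simp [h]
    · norm_num
      field_simp
      ring
  simpa only [le_sub_iff_add_le', hexp] using hsum

theorem measureReal_preimage_coe_finset {Y : Ω → S} (hY : Measurable Y) {P : S → ℝ}
    (hP0 : ∀ s, 0 ≤ P s) (hlaw : ∀ s, μ (Y ⁻¹' {s}) = ENNReal.ofReal (P s)) (A : Finset S) :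
    μ.real (Y ⁻¹' A) = ∑ s ∈ A, P s := by
  rw [← sum_measureReal_preimage_singleton A (fun s _ => hY (measurableSet_singleton s))
    fun s _ => by simp [hlaw]]
  exact sum_congr rfl fun s _ => by rw [measureReal_def, hlaw, ENNReal.toReal_ofReal (hP0 s)]

theorem ofReal_one_sub_measureReal_compl_le [IsProbabilityMeasure μ] (E : Set Ω) :
    ENNReal.ofReal (1 - μ.real Eᶜ) ≤ μ E := by
  rw [ENNReal.ofReal_le_iff_le_toReal (measure_ne_top μ E), ← measureReal_def]
  have hunion := measureReal_union_le (μ := μ) E Eᶜ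
  rw [Set.union_compl_self, probReal_univ] at hunion
  linarith

end Probability

/-- **Empirical distribution concentration.** Let `S` be a nonempty finite set, `P` a
probability mass function on `S`, and `X 0, …, X (T-1)` i.i.d. `S`-valued random variables
with law `P` (`T ≥ 1`). For every `δ ∈ (0, e⁻¹]`, with probability at least `1 - δ`,
`‖P̂ - P‖₁ ≤ (1 + √2) · √(|S| · log(1/δ) / T)`, where `P̂` is the empirical distribution. -/
theorem empirical_distribution_l1_concentration
    {S : Type*} [Fintype S] [Nonempty S] [DecidableEq S] [MeasurableSpace S] [MeasurableSingletonClass S]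
    (P : S → ℝ) (hP0 : ∀ s, 0 ≤ P s) (hP1 : ∑ s, P s = 1)
    {Ω : Type*} [MeasurableSpace Ω] (μ : Measure Ω) [IsProbabilityMeasure μ]
    (T : ℕ) (hT : 1 ≤ T)
    (X : Fin T → Ω → S) (hmeas : ∀ t, Measurable (X t))
    (hindep : iIndepFun X μ)
    (hlaw : ∀ t s, μ (X t ⁻¹' {s}) = ENNReal.ofReal (P s))
    (δ : ℝ) (hδ0 : 0 < δ) (hδ1 : δ ≤ Real.exp (-1)) :
    ENNReal.ofReal (1 - δ) ≤
      μ {ω | ∑ s, |((Finset.univ.filter fun t => X t ω = s).card : ℝ) / T - P s| ≤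
        (1 + Real.sqrt 2) *
          Real.sqrt ((Fintype.card S : ℝ) * Real.log (1 / δ) / T)} := by
  set ε := (1 + √2) * √(Fintype.card S * log (1 / δ) / T)
  set deviation : Finset S → Set Ω :=
    fun A => {ω | T * ∑ s ∈ A, P s + T * (ε / 2) ≤ #{t | X t ω ∈ A}}
  have hbad : {ω | ∑ s, |(#{t | X t ω = s} : ℝ) / T - P s| ≤ ε}ᶜ ⊆ ⋃ A, deviation A :=
    fun ω (hω : ¬ _ ≤ ε) => Set.mem_iUnion.mpr
      (exists_finset_mul_add_le_card_filter_mem (by omega) (X · ω) hP1 (not_le.mp hω).le)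
  have hhoeffding : ∀ A, μ.real (deviation A) ≤ exp (-2 * T * (ε / 2) ^ 2) := fun A => by
    simpa only [Fintype.card_fin] using measureReal_card_filter_mem_ge_le hmeas hindep A
      (fun t => measureReal_preimage_coe_finset (hmeas t) hP0 (hlaw t) A) (by positivity)
  have hcompl : μ.real {ω | ∑ s, |(#{t | X t ω = s} : ℝ) / T - P s| ≤ ε}ᶜ ≤ δ := calc
    _ ≤ ∑ A, μ.real (deviation A) :=
        (measureReal_mono hbad).trans (measureReal_iUnion_fintype_le _)
    _ ≤ 2 ^ Fintype.card S * exp (-2 * T * (ε / 2) ^ 2) :=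
        (sum_le_sum fun A _ => hhoeffding A).trans_eq (by simp [Fintype.card_finset])
    _ ≤ δ := two_pow_mul_exp_le Fintype.card_pos hδ0 hδ1 (by positivity)
  exact (ENNReal.ofReal_le_ofReal (by linarith)).trans (ofReal_one_sub_measureReal_compl_le _)
end

section
/- Let S be a nonempty finite set with cardinality |S|, let P be a probability mass function on S, and let X_1,...,X_T (T ≥ 1) be i.i.d. S-valued random variables with law P. Then the expected L1 deviation of the empirical distribution satisfies E[ ‖P̂ − P‖₁ ] ≤ √( |S| / T ). -/
/-!
For each `s`, `T · P̂(s)` is a sum of `T` independent indicators of mean `P(s)`, so its variance is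
`T · P(s) (1 - P(s)) ≤ T · P(s)` and `E |P̂(s) - P(s)| ≤ √(Var P̂(s)) ≤ √(P(s) / T)`. Summing over
`s`, Cauchy–Schwarz gives `∑ s, √P(s) ≤ √|S|` because `∑ s, P(s) = 1`.
-/

open MeasureTheory ProbabilityTheory Finset

lemma Real.sum_sqrt_le_sqrt_card_mul_sum {ι : Type*} (s : Finset ι) {f : ι → ℝ}
    (hf : ∀ i, 0 ≤ f i) : ∑ i ∈ s, √(f i) ≤ √(#s * ∑ i ∈ s, f i) := by
  simpa [Real.sqrt_mul (Nat.cast_nonneg _)] using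
    Real.sum_sqrt_mul_sqrt_le s (fun _ => zero_le_one) hf

namespace ProbabilityTheory

variable {Ω : Type*} [MeasurableSpace Ω] {μ : Measure Ω} [IsProbabilityMeasure μ]

lemma integral_abs_le_sqrt_integral_sq {f : Ω → ℝ} (hf : MemLp f 2 μ) :
    ∫ ω, |f ω| ∂μ ≤ √(∫ ω, f ω ^ 2 ∂μ) := by
  have h := variance_nonneg |f| μ
  rw [variance_eq_sub hf.abs] at h
  refine Real.le_sqrt_of_sq_le ?_
  simpa [sq_abs] using h

lemma integral_abs_sub_integral_le_sqrt_variance {Y : Ω → ℝ} (hY : MemLp Y 2 μ) :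
    ∫ ω, |Y ω - μ[Y]| ∂μ ≤ √(Var[Y; μ]) := by
  rw [variance_eq_integral hY.aemeasurable]
  exact integral_abs_le_sqrt_integral_sq (hY.sub (memLp_const _))

lemma variance_indicator_one {E : Set Ω} (hE : MeasurableSet E) :
    Var[E.indicator 1; μ] = μ.real E - μ.real E ^ 2 := by
  have hsq : E.indicator (1 : Ω → ℝ) ^ 2 = E.indicator 1 := by
    ext ω; by_cases h : ω ∈ E <;> simp [h]
  have hE1 : MemLp (E.indicator (1 : Ω → ℝ)) 2 μ := (memLp_const 1).indicator hE
  rw [variance_eq_sub hE1, hsq, integral_indicator_one hE]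

lemma integral_abs_sum_div_card_sub_le_sqrt {ι : Type*} [Fintype ι] [Nonempty ι]
    {Y : ι → Ω → ℝ} (hY : ∀ i, MemLp (Y i) 2 μ) (hindep : Pairwise fun i j => Y i ⟂ᵢ[μ] Y j)
    {m v : ℝ} (hm : ∀ i, μ[Y i] = m) (hv : ∀ i, Var[Y i; μ] ≤ v) :
    ∫ ω, |(∑ i, Y i ω) / Fintype.card ι - m| ∂μ ≤ √(v / Fintype.card ι) := by
  set n : ℝ := (Fintype.card ι : ℝ)
  have hn : 0 < n := Nat.cast_pos.mpr Fintype.card_pos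
  set Z : Ω → ℝ := ∑ i, Y i
  have hZ : MemLp Z 2 μ := memLp_finsetSum' _ fun i _ => hY i
  have hmean : μ[Z] = n * m := by
    simp only [Z, Finset.sum_apply]
    rw [integral_finsetSum _ fun i _ => (hY i).integrable one_le_two]
    simp [hm, n]
  have hvar : Var[Z; μ] ≤ n * v := by
    rw [IndepFun.variance_sum (fun i _ => hY i) fun i _ j _ hij => hindep hij]
    simpa [n] using sum_le_sum fun i (_ : i ∈ univ) => hv i
  calc ∫ ω, |(∑ i, Y i ω) / n - m| ∂μ = (∫ ω, |Z ω - μ[Z]| ∂μ) / n := by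
        rw [← integral_div]
        refine integral_congr_ae (.of_forall fun ω => ?_)
        rw [hmean]
        simp only [Z, Finset.sum_apply]
        rw [div_sub' hn.ne', abs_div, abs_of_pos hn]
    _ ≤ √(n * v) / n := by
        gcongr
        exact (integral_abs_sub_integral_le_sqrt_variance hZ).trans (Real.sqrt_le_sqrt hvar)
    _ = √(v / n) := by
        have hsn : 0 < √n := Real.sqrt_pos.mpr hn
        rw [Real.sqrt_mul hn.le, Real.sqrt_div' _ hn.le]
        field_simp
        rw [Real.sq_sqrt hn.le, mul_comm]

lemma integral_abs_frequency_sub_le {ι S : Type*} [Fintype ι] [Nonempty ι] [MeasurableSpace S]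
    [MeasurableSingletonClass S] {X : ι → Ω → S} (hX : ∀ i, Measurable (X i))
    (hindep : iIndepFun X μ) {s : S} {p : ℝ} (hp : ∀ i, μ.real (X i ⁻¹' {s}) = p) :
    ∫ ω, |(∑ i, (X i ⁻¹' {s}).indicator 1 ω) / Fintype.card ι - p| ∂μ ≤
      √(p / Fintype.card ι) := by
  have hevent : ∀ i, MeasurableSet (X i ⁻¹' {s}) := fun i => hX i (measurableSet_singleton s)
  refine integral_abs_sum_div_card_sub_le_sqrt (Y := fun i => (X i ⁻¹' {s}).indicator 1)
    (fun i => (memLp_const 1).indicator (hevent i))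
    (fun i j hij => ?_) (fun i => by rw [integral_indicator_one (hevent i), hp])
    (fun i => by rw [variance_indicator_one (hevent i), hp]; exact sub_le_self _ (sq_nonneg _))
  exact (hindep.comp (fun _ => ({s} : Set S).indicator (1 : S → ℝ))
    fun _ => measurable_one.indicator (measurableSet_singleton s)).indepFun hij

end ProbabilityTheory

theorem empirical_distribution_expected_l1_general
    {S : Type*} [Fintype S] [DecidableEq S] [MeasurableSpace S]
    [MeasurableSingletonClass S]
    (P : S → ℝ) (hP0 : ∀ s, 0 ≤ P s) (hP1 : ∑ s, P s = 1)
    {Ω : Type*} [MeasurableSpace Ω] (μ : Measure Ω) [IsProbabilityMeasure μ]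
    (T : ℕ) (hT : 1 ≤ T)
    (X : Fin T → Ω → S) (hmeas : ∀ t, Measurable (X t))
    (hindep : iIndepFun X μ)
    (hlaw : ∀ t s, μ (X t ⁻¹' {s}) = ENNReal.ofReal (P s)) :
    ∫ ω, (∑ s, |((Finset.univ.filter fun t => X t ω = s).card : ℝ) / T - P s|) ∂μ ≤
      Real.sqrt ((Fintype.card S : ℝ) / T) := by
  have : Nonempty (Fin T) := ⟨⟨0, hT⟩⟩
  let Y : S → Fin T → Ω → ℝ := fun s t => (X t ⁻¹' {s}).indicator 1
  have hcount : ∀ s ω, (#{t | X t ω = s} : ℝ) = ∑ t, Y s t ω := by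
    intro s ω
    rw [natCast_card_filter]
    exact sum_congr rfl fun t _ => by by_cases h : X t ω = s <;> simp [Y, h]
  have hfreq : ∀ s, ∫ ω, |(∑ t, Y s t ω) / T - P s| ∂μ ≤ √(P s / T) := fun s => by
    simpa using integral_abs_frequency_sub_le hmeas hindep fun t => by
      simp [measureReal_def, hlaw, hP0]
  have hY : ∀ s t, Integrable (Y s t) μ := fun s t =>
    (integrable_const 1).indicator (hmeas t (measurableSet_singleton s))
  simp_rw [hcount]
  calc ∫ ω, ∑ s, |(∑ t, Y s t ω) / T - P s| ∂μ
      = ∑ s, ∫ ω, |(∑ t, Y s t ω) / T - P s| ∂μ := integral_finsetSum _ fun s _ =>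
        (((integrable_finsetSum _ fun t _ => hY s t).div_const _).sub (integrable_const _)).abs
    _ ≤ ∑ s, √(P s / T) := sum_le_sum fun s _ => hfreq s
    _ ≤ √(Fintype.card S * ∑ s, P s / T) :=
        Real.sum_sqrt_le_sqrt_card_mul_sum _ fun s => div_nonneg (hP0 s) T.cast_nonneg
    _ = √(Fintype.card S / T) := by rw [← sum_div, hP1, mul_one_div]

/-- **Expected L1 deviation of the empirical distribution.** Let `S` be a nonempty finite
set, `P` a probability mass function on `S`, and `X 0, …, X (T-1)` i.i.d. `S`-valued
random variables with law `P` (`T ≥ 1`). Then `E[‖P̂ - P‖₁] ≤ √(|S| / T)`. -/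
theorem empirical_distribution_expected_l1
    {S : Type*} [Fintype S] [Nonempty S] [DecidableEq S] [MeasurableSpace S]
    [MeasurableSingletonClass S]
    (P : S → ℝ) (hP0 : ∀ s, 0 ≤ P s) (hP1 : ∑ s, P s = 1)
    {Ω : Type*} [MeasurableSpace Ω] (μ : Measure Ω) [IsProbabilityMeasure μ]
    (T : ℕ) (hT : 1 ≤ T)
    (X : Fin T → Ω → S) (hmeas : ∀ t, Measurable (X t))
    (hindep : iIndepFun X μ)
    (hlaw : ∀ t s, μ (X t ⁻¹' {s}) = ENNReal.ofReal (P s)) :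
    ∫ ω, (∑ s, |((Finset.univ.filter fun t => X t ω = s).card : ℝ) / T - P s|) ∂μ ≤
      Real.sqrt ((Fintype.card S : ℝ) / T) :=
  empirical_distribution_expected_l1_general P hP0 hP1 μ T hT X hmeas hindep hlaw
end

section
/- Let S be a finite set with cardinality n, and let c : S → ℝ take values in {0,1} with m = #{s ∈ S : c(s) = 1} satisfying 1 ≤ m ≤ n. If c' is obtained from c by incrementing by 1 some state s₀ with c(s₀) = 1 (a revisited state), then J(c') = (m+1)² / ( n·(m+3) ); this is strictly less than (m+1)/n, and if moreover m ≥ 2 then J(c') < m/n = J(c), i.e., revisiting an already-visited state strictly decreases Jain's fairness index. -/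
/-! Revisiting a state `s₀` adds `1` to `∑ c` and `2 c(s₀) + 1` to `∑ c²`. For a `0/1` vector
with `m` ones both sums equal `m`, so `J(c) = m/n`, while after a revisit the sums are `m + 1`
and `m + 3`; then `J(c') < x/n` amounts to `(m+1)² < x (m+3)`, which holds for `x = m + 1` and,
as soon as `m ≥ 2`, for `x = m`. -/

open Finset

/-- Jain's fairness index of a count vector `c` on a finite set `S`:
`J(c) = (∑ c)² / (|S| · ∑ c²)`. -/
noncomputable def jainIndex {S : Type*} [Fintype S] (c : S → ℝ) : ℝ :=
  (∑ s, c s) ^ 2 / ((Fintype.card S : ℝ) * ∑ s, (c s) ^ 2)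

open Function

theorem Fintype.sum_update_eq_sum_add_sub {ι M : Type*} [Fintype ι] [DecidableEq ι]
    [AddCommGroup M] (f : ι → M) (i : ι) (b : M) :
    ∑ j, update f i b j = ∑ j, f j + (b - f i) := by
  rw [sum_update_of_mem (mem_univ i), sum_eq_add_sum_sdiff_singleton_of_mem (mem_univ i) f]
  abel

theorem jainIndex_update_add_one {S : Type*} [Fintype S] [DecidableEq S] (c : S → ℝ) (s₀ : S) :
    jainIndex (update c s₀ (c s₀ + 1)) =
      (∑ s, c s + 1) ^ 2 / (Fintype.card S * (∑ s, c s ^ 2 + (2 * c s₀ + 1))) := by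
  have hsq : ∀ s, update c s₀ (c s₀ + 1) s ^ 2 = update (fun s ↦ c s ^ 2) s₀ ((c s₀ + 1) ^ 2) s :=
    apply_update (fun _ x ↦ x ^ 2) c s₀ (c s₀ + 1)
  simp only [jainIndex, hsq, Fintype.sum_update_eq_sum_add_sub]
  ring_nf

section ZeroOne

variable {S : Type*} [Fintype S] {c : S → ℝ}

theorem sum_eq_card_filter_of_zero_or_one (hc : ∀ s, c s = 0 ∨ c s = 1) :
    ∑ s, c s = #{s | c s = 1} := by
  rw [← sum_boole]
  refine sum_congr rfl fun s _ ↦ ?_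
  rcases hc s with h | h <;> simp [h]

theorem sum_sq_eq_sum_of_zero_or_one (hc : ∀ s, c s = 0 ∨ c s = 1) :
    ∑ s, c s ^ 2 = ∑ s, c s :=
  sum_congr rfl fun s _ ↦ by rcases hc s with h | h <;> simp [h]

theorem jainIndex_of_zero_or_one (hc : ∀ s, c s = 0 ∨ c s = 1) :
    jainIndex c = #{s | c s = 1} / Fintype.card S := by
  rw [jainIndex, sum_sq_eq_sum_of_zero_or_one hc, sum_eq_card_filter_of_zero_or_one hc]
  rcases eq_or_ne (#{s | c s = 1} : ℝ) 0 with h | h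
  · simp [h]
  · rw [sq, mul_comm (Fintype.card S : ℝ), mul_div_mul_left _ _ h]

end ZeroOne

theorem div_mul_lt_div_of_lt_mul {a b n x : ℝ} (hn : 0 < n) (hb : 0 < b) (h : a < x * b) :
    a / (n * b) < x / n := by
  rw [mul_comm, ← div_div]
  exact div_lt_div_of_pos_right ((div_lt_iff₀ hb).mpr h) hn

theorem jainIndex_revisit_decreases_general
    {S : Type*} [Fintype S] [DecidableEq S]
    (c : S → ℝ) (hc01 : ∀ s, c s = 0 ∨ c s = 1)
    (m : ℕ) (hm : m = (Finset.univ.filter fun s => c s = 1).card)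
    (s₀ : S) (hs₀ : c s₀ = 1)
    (c' : S → ℝ) (hc' : c' = Function.update c s₀ (c s₀ + 1)) :
    jainIndex c' = ((m : ℝ) + 1) ^ 2 / ((Fintype.card S : ℝ) * ((m : ℝ) + 3)) ∧
    jainIndex c' < ((m : ℝ) + 1) / (Fintype.card S : ℝ) ∧
    (2 ≤ m → jainIndex c' < (m : ℝ) / (Fintype.card S : ℝ) ∧
      (m : ℝ) / (Fintype.card S : ℝ) = jainIndex c) := by
  have hn : (0 : ℝ) < Fintype.card S := by exact_mod_cast Fintype.card_pos_iff.mpr ⟨s₀⟩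
  have hsum : ∑ s, c s = m := by rw [sum_eq_card_filter_of_zero_or_one hc01, hm]
  have hJ' : jainIndex c' = ((m : ℝ) + 1) ^ 2 / (Fintype.card S * ((m : ℝ) + 3)) := by
    rw [hc', jainIndex_update_add_one, sum_sq_eq_sum_of_zero_or_one hc01, hsum, hs₀]
    norm_num
  have hm0 : (0 : ℝ) ≤ m := m.cast_nonneg
  refine ⟨hJ', ?_, fun hm2 ↦ ⟨?_, ?_⟩⟩
  · rw [hJ']
    exact div_mul_lt_div_of_lt_mul hn (by positivity) (by nlinarith)
  · have hm2 : (2 : ℝ) ≤ m := by exact_mod_cast hm2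
    rw [hJ']
    exact div_mul_lt_div_of_lt_mul hn (by positivity) (by nlinarith)
  · rw [jainIndex_of_zero_or_one hc01, hm]

/-- **Revisiting an already-visited state decreases Jain's fairness index.** Let `S` be
a finite set of cardinality `n` and let `c : S → ℝ` take values in `{0, 1}` with
`m = #{s : c s = 1}` satisfying `1 ≤ m ≤ n`. If `c'` is obtained from `c` by
incrementing by `1` some state `s₀` with `c s₀ = 1`, then
`J(c') = (m+1)² / (n·(m+3))`; this is strictly less than `(m+1)/n`, and if moreover
`m ≥ 2` then `J(c') < m/n = J(c)`. -/
theorem jainIndex_revisit_decreases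
    {S : Type*} [Fintype S] [DecidableEq S]
    (c : S → ℝ) (hc01 : ∀ s, c s = 0 ∨ c s = 1)
    (m : ℕ) (hm : m = (Finset.univ.filter fun s => c s = 1).card)
    (hm1 : 1 ≤ m) (hmn : m ≤ Fintype.card S)
    (s₀ : S) (hs₀ : c s₀ = 1)
    (c' : S → ℝ) (hc' : c' = Function.update c s₀ (c s₀ + 1)) :
    jainIndex c' = ((m : ℝ) + 1) ^ 2 / ((Fintype.card S : ℝ) * ((m : ℝ) + 3)) ∧
    jainIndex c' < ((m : ℝ) + 1) / (Fintype.card S : ℝ) ∧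
    (2 ≤ m → jainIndex c' < (m : ℝ) / (Fintype.card S : ℝ) ∧
      (m : ℝ) / (Fintype.card S : ℝ) = jainIndex c) :=
  jainIndex_revisit_decreases_general c hc01 m hm s₀ hs₀ c' hc'
end
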